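/- Let A_1,…,A_5 be the linear endomorphisms of ℝ^5 (coordinates (X,Y,U1,U2,U3)) given by A_1 = (2X, 2Y, U1, U2, U3), A_2 = (0, 0, −8Y, 4X, 0), A_3 = (0, 0, 0, 0, 2Y), A_4 = (0, 0, 4X, −8Y, 0), A_5 = 0. Then for every linear form L : ℝ^5 → ℝ, the linear span of the six linear forms L∘A_1,…,L∘A_5 and L in the dual space of ℝ^5 has dimension at most 3. -/

import Mathlib

open Matrix

/-- The linear part `A₁ = (2X, 2Y, U1, U2, U3)` of `η₁ ∈ Lift(P₂₂)`. -/
noncomputable def A1 : (Fin 5 → ℝ) →ₗ[ℝ] (Fin 5 → ℝ) :=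
  (Matrix.diagonal ![2, 2, 1, 1, 1]).mulVecLin

/-- The linear part `A₂ = (0, 0, −8Y, 4X, 0)` of `η₂ ∈ Lift(P₂₂)`. -/
noncomputable def A2 : (Fin 5 → ℝ) →ₗ[ℝ] (Fin 5 → ℝ) :=
  ((Matrix.single 2 1 (-8) + Matrix.single 3 0 4 :
    Matrix (Fin 5) (Fin 5) ℝ)).mulVecLin

/-- The linear part `A₃ = (0, 0, 0, 0, 2Y)` of `η₃ ∈ Lift(P₂₂)`. -/
noncomputable def A3 : (Fin 5 → ℝ) →ₗ[ℝ] (Fin 5 → ℝ) :=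
  ((Matrix.single 4 1 2 : Matrix (Fin 5) (Fin 5) ℝ)).mulVecLin

/-- The linear part `A₄ = (0, 0, 4X, −8Y, 0)` of `η₄ ∈ Lift(P₂₂)`. -/
noncomputable def A4 : (Fin 5 → ℝ) →ₗ[ℝ] (Fin 5 → ℝ) :=
  ((Matrix.single 2 0 4 + Matrix.single 3 1 (-8) :
    Matrix (Fin 5) (Fin 5) ℝ)).mulVecLin

/-- The linear part `A₅ = 0` of `η₅ ∈ Lift(P₂₂)`. -/
noncomputable def A5 : (Fin 5 → ℝ) →ₗ[ℝ] (Fin 5 → ℝ) := 0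

/-!
Every `Aᵢ` acts as a scalar `cᵢ` (`1` for `A₁`, `0` for the others) on the subspace
`N = {X = Y = 0}`, so each `L ∘ Aᵢ - cᵢ • L` vanishes on `N`. The annihilator of `N` is the
range of the dual of the projection to the `(X, Y)`-plane, hence has dimension at most `2`, and
the span in question lies in this annihilator plus `ℝ ∙ L`.
-/

open Module Submodule

section

variable {K V : Type*} [Field K] [AddCommGroup V] [Module K V]

theorem finrank_span_le_finrank_add_one_of_sub_smul_mem [FiniteDimensional K V] {s : Set V}
    (x : V) (U : Submodule K V) (h : ∀ y ∈ s, ∃ c : K, y - c • x ∈ U) :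
    finrank K (span K s) ≤ finrank K U + 1 := by
  have hle : span K s ≤ U ⊔ K ∙ x := by
    rw [span_le]
    intro y hy
    obtain ⟨c, hc⟩ := h y hy
    exact mem_sup.2 ⟨_, hc, c • x, smul_mem _ c (mem_span_singleton_self x), sub_add_cancel y _⟩
  calc finrank K (span K s) ≤ finrank K ↥(U ⊔ K ∙ x) := finrank_mono hle
    _ ≤ finrank K U + finrank K (K ∙ x) := finrank_add_le_finrank_add_finrank U _
    _ ≤ finrank K U + 1 := by
        gcongr
        simpa using finrank_span_le_card (R := K) ({x} : Set V)

theorem comp_sub_smul_mem_dualAnnihilator {W : Submodule K V} {A : End K V} {c : K}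
    (hA : W ≤ A.eigenspace c) (L : Dual K V) : L ∘ₗ A - c • L ∈ W.dualAnnihilator := by
  rw [mem_dualAnnihilator]
  intro w hw
  simp [End.mem_eigenspace_iff.1 (hA hw)]

theorem finrank_dualAnnihilator_ker_le {W : Type*} [AddCommGroup W] [Module K W]
    [FiniteDimensional K W] (π : V →ₗ[K] W) :
    finrank K (LinearMap.ker π).dualAnnihilator ≤ finrank K W := by
  rw [← LinearMap.range_dualMap_eq_dualAnnihilator_ker, ← Subspace.dual_finrank_eq (V := W)]
  exact π.dualMap.finrank_range_le

end

noncomputable def projXY : (Fin 5 → ℝ) →ₗ[ℝ] (Fin 2 → ℝ) := LinearMap.funLeft ℝ ℝ ![0, 1]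

theorem mem_ker_projXY {v : Fin 5 → ℝ} : v ∈ LinearMap.ker projXY ↔ v 0 = 0 ∧ v 1 = 0 := by
  simp [projXY, LinearMap.funLeft, funext_iff, Fin.forall_fin_two]

theorem ker_projXY_le_eigenspace_A1 : LinearMap.ker projXY ≤ End.eigenspace A1 1 := by
  intro v hv
  obtain ⟨h0, h1⟩ := mem_ker_projXY.1 hv
  rw [End.mem_eigenspace_iff, one_smul]
  ext i
  fin_cases i <;> simp [A1, mulVec_diagonal, h0, h1]

theorem ker_projXY_le_eigenspace_A2 : LinearMap.ker projXY ≤ End.eigenspace A2 0 := by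
  intro v hv
  obtain ⟨h0, h1⟩ := mem_ker_projXY.1 hv
  simp [A2, single_mulVec, h0, h1]

theorem ker_projXY_le_eigenspace_A3 : LinearMap.ker projXY ≤ End.eigenspace A3 0 := by
  intro v hv
  obtain ⟨-, h1⟩ := mem_ker_projXY.1 hv
  simp [A3, single_mulVec, h1]

theorem ker_projXY_le_eigenspace_A4 : LinearMap.ker projXY ≤ End.eigenspace A4 0 := by
  intro v hv
  obtain ⟨h0, h1⟩ := mem_ker_projXY.1 hv
  simp [A4, single_mulVec, h0, h1]

theorem ker_projXY_le_eigenspace_A5 : LinearMap.ker projXY ≤ End.eigenspace A5 0 := by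
  simp [End.eigenspace_zero, A5]

/-- For every linear form `L : ℝ⁵ → ℝ`, the span of `L∘A₁, …, L∘A₅, L` in the dual of
`ℝ⁵` has dimension at most `3`. This rank bound shows that `P₂₂` admits no hyperplane
section of `𝒜ₑ`-codimension `1` (nor `2`), whence `(5,4)` is not in the extra-nice
dimensions. -/
theorem span_L_comp_liftP22_linear_parts_le_three :
    ∀ L : (Fin 5 → ℝ) →ₗ[ℝ] ℝ,
      Module.finrank ℝ
        (Submodule.span ℝ
          ({L ∘ₗ A1, L ∘ₗ A2, L ∘ₗ A3, L ∘ₗ A4, L ∘ₗ A5, L} :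
            Set ((Fin 5 → ℝ) →ₗ[ℝ] ℝ))) ≤ 3 := by
  intro L
  have hmem : ∀ f ∈ ({L ∘ₗ A1, L ∘ₗ A2, L ∘ₗ A3, L ∘ₗ A4, L ∘ₗ A5, L} :
      Set ((Fin 5 → ℝ) →ₗ[ℝ] ℝ)), ∃ c : ℝ, f - c • L ∈ (LinearMap.ker projXY).dualAnnihilator := by
    rintro f (rfl | rfl | rfl | rfl | rfl | rfl)
    · exact ⟨1, comp_sub_smul_mem_dualAnnihilator ker_projXY_le_eigenspace_A1 L⟩
    · exact ⟨0, comp_sub_smul_mem_dualAnnihilator ker_projXY_le_eigenspace_A2 L⟩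
    · exact ⟨0, comp_sub_smul_mem_dualAnnihilator ker_projXY_le_eigenspace_A3 L⟩
    · exact ⟨0, comp_sub_smul_mem_dualAnnihilator ker_projXY_le_eigenspace_A4 L⟩
    · exact ⟨0, comp_sub_smul_mem_dualAnnihilator ker_projXY_le_eigenspace_A5 L⟩
    · exact ⟨1, by simp⟩
  calc _ ≤ finrank ℝ (LinearMap.ker projXY).dualAnnihilator + 1 :=
        finrank_span_le_finrank_add_one_of_sub_smul_mem L _ hmem
    _ ≤ 2 + 1 := by
        gcongr
        simpa using finrank_dualAnnihilator_ker_le projXY
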